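/- arXiv:2310.10785 — 5 statements merged into one kernel-verified Lean document; each statement's English description precedes it below -/
import Mathlib

section
/- Let π = (κ, b) be a cyclic derivation of a sequent Γ ⇒ φ in iK4_Seq, with assumption leaves partitioned into boxed assumptions (those having an application of the rule R_K4 strictly below them on the path from the root) and non-boxed assumptions (the rest), and for an assumption leaf a let S_a denote its sequent. Then iGL proves the formula (⋀{ S_a^# ∧ □(S_a^#) : a a non-boxed assumption } ∧ ⋀{ □(S_a^#) : a a boxed assumption }) → (Γ ⇒ φ)^#. -/
/-- Modal formulas: propositional variables (indexed by ℕ), ⊥, →, ∧, ∨, □. -/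
inductive Formula : Type
  | var : ℕ → Formula
  | bot : Formula
  | imp : Formula → Formula → Formula
  | and : Formula → Formula → Formula
  | or : Formula → Formula → Formula
  | box : Formula → Formula
  deriving DecidableEq

/-- A sequent `Γ ⇒ φ`: a finite multiset of formulas and a formula. -/
abbrev Sequent : Type := Multiset Formula × Formula

/-- `□Γ`. -/
def boxM (Γ : Multiset Formula) : Multiset Formula := Γ.map Formula.box

/-- `■Γ = Γ, □Γ`. -/
def bbox (Γ : Multiset Formula) : Multiset Formula := Γ + boxM Γ

/-- Names of the sequent calculus rules (plus a marker for assumption leaves). -/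
inductive RulName : Type
  | prop | absurd | andL | andR | orL | orR0 | orR1 | impL | impR | rk4 | rgl | assump
  deriving DecidableEq

open Formula in
/-- `Rule prems concl L`: the rule named `L` has an instance with premises `prems`
and conclusion `concl`. -/
inductive Rule : List Sequent → Sequent → RulName → Prop
  | prop (Γ : Multiset Formula) (p : ℕ) : Rule [] (var p ::ₘ Γ, var p) .prop
  | absurd (Γ : Multiset Formula) (φ) : Rule [] (bot ::ₘ Γ, φ) .absurd
  | andL (Γ : Multiset Formula) (φ ψ χ) :
      Rule [(φ ::ₘ ψ ::ₘ Γ, χ)] (and φ ψ ::ₘ Γ, χ) .andL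
  | andR (Γ : Multiset Formula) (φ ψ) :
      Rule [(Γ, φ), (Γ, ψ)] (Γ, and φ ψ) .andR
  | orL (Γ : Multiset Formula) (φ ψ χ) :
      Rule [(φ ::ₘ Γ, χ), (ψ ::ₘ Γ, χ)] (or φ ψ ::ₘ Γ, χ) .orL
  | orR0 (Γ : Multiset Formula) (φ ψ) : Rule [(Γ, φ)] (Γ, or φ ψ) .orR0
  | orR1 (Γ : Multiset Formula) (φ ψ) : Rule [(Γ, ψ)] (Γ, or φ ψ) .orR1
  | impL (Γ : Multiset Formula) (φ ψ χ) :
      Rule [(imp φ ψ ::ₘ Γ, φ), (ψ ::ₘ Γ, χ)] (imp φ ψ ::ₘ Γ, χ) .impL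
  | impR (Γ : Multiset Formula) (φ ψ) : Rule [(φ ::ₘ Γ, ψ)] (Γ, imp φ ψ) .impR
  | rk4 (Pi Γ : Multiset Formula) (φ) :
      Rule [(bbox Γ, φ)] (Pi + boxM Γ, box φ) .rk4
  | rgl (Pi Γ : Multiset Formula) (φ) :
      Rule [(box φ ::ₘ bbox Γ, φ)] (Pi + boxM Γ, box φ) .rgl

/-- The rules of `iGL_Seq` (iG3 + R_GL). -/
def iGLName (L : RulName) : Prop := L ≠ .rk4 ∧ L ≠ .assump

/-- The rules of `iK4_Seq` (iG3 + R_K4). -/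
def iK4Name (L : RulName) : Prop := L ≠ .rgl ∧ L ≠ .assump

/-- Labels of nodes of proof trees: a sequent together with a rule name. -/
abbrev Label : Type := Sequent × RulName

/-- Finite, finitely branching trees with labels in `A`. -/
inductive FinTree (A : Type) : Type
  | node : A → List (FinTree A) → FinTree A

/-- The label of the root. -/
def FinTree.label {A : Type} : FinTree A → A
  | .node a _ => a

/-- `π` is a (finite) proof over the rules whose names satisfy `allowed`:
every node carries a rule instance. -/
inductive IsProof (allowed : RulName → Prop) : FinTree Label → Prop
  | rule (S : Sequent) (L : RulName) (ts : List (FinTree Label)) :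
      allowed L → Rule (ts.map fun t => t.label.1) S L →
      (∀ t ∈ ts, IsProof allowed t) → IsProof allowed (.node (S, L) ts)

/-- `π` is a (finite) derivation over the rules whose names satisfy `allowed`:
leaves may also be unjustified assumptions. -/
inductive IsDeriv (allowed : RulName → Prop) : FinTree Label → Prop
  | rule (S : Sequent) (L : RulName) (ts : List (FinTree Label)) :
      allowed L → Rule (ts.map fun t => t.label.1) S L →
      (∀ t ∈ ts, IsDeriv allowed t) → IsDeriv allowed (.node (S, L) ts)
  | assump (S : Sequent) : IsDeriv allowed (.node (S, .assump) [])

/-- `iGL_fin ⊢ S`: `S` is the conclusion of a finite proof over the rules `iGL_Seq`. -/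
def iGLfinProv (S : Sequent) : Prop :=
  ∃ π : FinTree Label, IsProof iGLName π ∧ π.label.1 = S

/-- `SubtreeAt t s u`: `s` is (the path to) a node of `t` and `u` is the subtree rooted there. -/
inductive SubtreeAt {A : Type} : FinTree A → List ℕ → FinTree A → Prop
  | refl (t : FinTree A) : SubtreeAt t [] t
  | step {a : A} {ts : List (FinTree A)} {i : ℕ} {s : List ℕ} {t u : FinTree A} :
      ts[i]? = some t → SubtreeAt t s u → SubtreeAt (.node a ts) (i :: s) u

/-- The node `s` of `π` is an assumption leaf carrying the sequent `S`. -/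
def AssumpLeafAt (π : FinTree Label) (s : List ℕ) (S : Sequent) : Prop :=
  ∃ u, SubtreeAt π s u ∧ u.label = (S, .assump)

/-- The node `s` of `π` is an assumption leaf. -/
def IsAssumpLeaf (π : FinTree Label) (s : List ℕ) : Prop :=
  ∃ S, AssumpLeafAt π s S

/-- The rule name at node `s` of `π` is `L`. -/
def RuleNameAt (π : FinTree Label) (s : List ℕ) (L : RulName) : Prop :=
  ∃ u, SubtreeAt π s u ∧ u.label.2 = L

/-- `t` is a legitimate backlink target for the assumption leaf `s` in `π`:
it is a proper ancestor of `s` carrying the same sequent, and the path from `t`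
to `s` contains an application of the rule `R_K4`. -/
def GoodBacklink (π : FinTree Label) (s t : List ℕ) : Prop :=
  (t <+: s ∧ t ≠ s) ∧
  (∃ u v, SubtreeAt π s u ∧ SubtreeAt π t v ∧ v.label.1 = u.label.1) ∧
  (∃ w, t <+: w ∧ w <+: s ∧ RuleNameAt π w .rk4)

/-- `iK4_circ ⊢ S`: `S` is the conclusion of a cyclic proof, i.e. a finite derivation
over the rules `iK4_Seq` together with a total backlink function on its assumption leaves. -/
def iK4circProv (S : Sequent) : Prop :=
  ∃ (π : FinTree Label) (b : List ℕ → List ℕ),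
    IsDeriv iK4Name π ∧ π.label.1 = S ∧
    ∀ s, IsAssumpLeaf π s → GoodBacklink π s (b s)
/-- Intuitionistic propositional tautologies in the modal language, given by a standard
Hilbert-style axiomatization (all axiom schemes instantiated with arbitrary modal formulas)
closed under modus ponens. -/
inductive IPC : Formula → Prop
  | a1 (φ ψ : Formula) : IPC (φ.imp (ψ.imp φ))
  | a2 (φ ψ χ : Formula) : IPC ((φ.imp (ψ.imp χ)).imp ((φ.imp ψ).imp (φ.imp χ)))
  | andI (φ ψ : Formula) : IPC (φ.imp (ψ.imp (φ.and ψ)))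
  | andE1 (φ ψ : Formula) : IPC ((φ.and ψ).imp φ)
  | andE2 (φ ψ : Formula) : IPC ((φ.and ψ).imp ψ)
  | orI1 (φ ψ : Formula) : IPC (φ.imp (φ.or ψ))
  | orI2 (φ ψ : Formula) : IPC (ψ.imp (φ.or ψ))
  | orE (φ ψ χ : Formula) : IPC ((φ.imp χ).imp ((ψ.imp χ).imp ((φ.or ψ).imp χ)))
  | efq (φ : Formula) : IPC (Formula.bot.imp φ)
  | mp {φ ψ : Formula} : IPC (φ.imp ψ) → IPC φ → IPC ψ

/-- The Hilbert system for `iGL`: the smallest intuitionistic normal modal logic containing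
all instances of the Löb axiom, i.e. all intuitionistic propositional tautologies, the K axiom
scheme and the Löb axiom scheme, closed under modus ponens and necessitation. -/
inductive iGLH : Formula → Prop
  | taut {φ : Formula} : IPC φ → iGLH φ
  | k (φ ψ : Formula) : iGLH (((φ.imp ψ).box).imp ((φ.box).imp (ψ.box)))
  | lob (φ : Formula) : iGLH ((((φ.box).imp φ).box).imp (φ.box))
  | mp {φ ψ : Formula} : iGLH (φ.imp ψ) → iGLH φ → iGLH ψ
  | nec {φ : Formula} : iGLH φ → iGLH (φ.box)

/-- `⊤` as the formula `⊥ → ⊥`. -/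
def Formula.top : Formula := Formula.bot.imp Formula.bot

/-- The conjunction `⋀Γ` of a list of formulas. -/
def conj (l : List Formula) : Formula := l.foldr Formula.and Formula.top
/-- The assumption leaf `s` of `π` is boxed: there is an application of the rule `R_K4`
strictly below it on the path from the root. -/
def BoxedAssump (π : FinTree Label) (s : List ℕ) : Prop :=
  ∃ w, w <+: s ∧ w ≠ s ∧ RuleNameAt π w .rk4

/-- `ψ` is an interpretation `S^# = ⋀Γ → φ` of the sequent `S = (Γ ⇒ φ)`
(for some enumeration of the multiset `Γ` as a list). -/
def InterpOf (S : Sequent) (ψ : Formula) : Prop :=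
  ∃ l : List Formula, (↑l : Multiset Formula) = S.1 ∧ ψ = (conj l).imp S.2

/-! ### Auxiliary material -/

namespace CDI

open Formula

theorem IPC.impRefl (φ : Formula) : IPC (φ.imp φ) :=
  ((IPC.a2 φ (φ.imp φ) φ).mp (IPC.a1 φ (φ.imp φ))).mp (IPC.a1 φ φ)

section Comb
variable {H a b c a' φ ψ χ : Formula}

theorem mpH (h1 : iGLH (H.imp (a.imp b))) (h2 : iGLH (H.imp a)) : iGLH (H.imp b) :=
  ((iGLH.taut (IPC.a2 H a b)).mp h1).mp h2

theorem wH (h : iGLH a) : iGLH (H.imp a) := (iGLH.taut (IPC.a1 a H)).mp h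

theorem transH (h1 : iGLH (a.imp b)) (h2 : iGLH (b.imp c)) : iGLH (a.imp c) :=
  mpH (wH h2) h1

theorem swapH (h : iGLH (a.imp (b.imp c))) : iGLH (b.imp (a.imp c)) :=
  mpH (mpH (wH (iGLH.taut (IPC.a2 a b c))) (wH h)) (iGLH.taut (IPC.a1 b a))

theorem mpH2 (h1 : iGLH (H.imp (a.imp (b.imp c)))) (h2 : iGLH (H.imp (a.imp b))) :
    iGLH (H.imp (a.imp c)) :=
  mpH (mpH (wH (iGLH.taut (IPC.a2 a b c))) h1) h2

theorem expH (h : iGLH ((a.and b).imp c)) : iGLH (b.imp (a.imp c)) :=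
  mpH2 (wH (wH h)) (swapH (iGLH.taut (IPC.andI a b)))

theorem andIH (h1 : iGLH (H.imp a)) (h2 : iGLH (H.imp b)) : iGLH (H.imp (a.and b)) :=
  mpH (mpH (wH (iGLH.taut (IPC.andI a b))) h1) h2

theorem impMono (h : iGLH (a'.imp a)) : iGLH ((a.imp c).imp (a'.imp c)) :=
  swapH (transH h (swapH (iGLH.taut (IPC.impRefl (a.imp c)))))

theorem conj_mem {l : List Formula} {φ : Formula} (h : φ ∈ l) : iGLH ((conj l).imp φ) := by
  induction l with
  | nil => cases h
  | cons ψ l ih =>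
    rcases List.mem_cons.mp h with rfl | h
    · exact iGLH.taut (IPC.andE1 _ _)
    · exact transH (iGLH.taut (IPC.andE2 _ _)) (ih h)

theorem conj_intro {H : Formula} {l : List Formula} (h : ∀ φ ∈ l, iGLH (H.imp φ)) :
    iGLH (H.imp (conj l)) := by
  induction l with
  | nil => exact wH (iGLH.taut (IPC.impRefl .bot))
  | cons ψ l ih => exact andIH (h ψ (by simp)) (ih fun φ hφ => h φ (by simp [hφ]))

theorem conj_sub {l l' : List Formula} (h : ∀ x ∈ l, x ∈ l') :
    iGLH ((conj l').imp (conj l)) :=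
  conj_intro fun φ hφ => conj_mem (h φ hφ)

theorem boxK (h : iGLH (a.imp b)) : iGLH (a.box.imp b.box) := (iGLH.k a b).mp (iGLH.nec h)

theorem boxAnd2 : iGLH (a.box.imp (b.box.imp ((a.and b).box))) :=
  transH (boxK (iGLH.taut (IPC.andI a b))) (iGLH.k b (a.and b))

theorem four (a : Formula) : iGLH (a.box.imp a.box.box) := by
  set ψ := a.and a.box with hψ
  have h2 : iGLH (ψ.box.imp a.box) := boxK (iGLH.taut (IPC.andE1 _ _))
  have h3 : iGLH (a.imp (ψ.box.imp ψ)) :=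
    expH (andIH (iGLH.taut (IPC.andE2 _ _)) (transH (iGLH.taut (IPC.andE1 _ _)) h2))
  have h6 : iGLH (ψ.box.imp a.box.box) := boxK (iGLH.taut (IPC.andE2 _ _))
  exact transH (transH (boxK h3) (iGLH.lob ψ)) h6

end Comb

/-- Provability from a context. -/
def SC (Γ : List Formula) (φ : Formula) : Prop := iGLH ((conj Γ).imp φ)

namespace SC
variable {Γ Γ' : List Formula} {φ ψ χ : Formula}

theorem ax (h : φ ∈ Γ) : SC Γ φ := conj_mem h
theorem thm (h : iGLH φ) : SC Γ φ := wH h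
theorem mp (h1 : SC Γ (φ.imp ψ)) (h2 : SC Γ φ) : SC Γ ψ := mpH h1 h2
theorem intro (h : SC (φ :: Γ) ψ) : SC Γ (φ.imp ψ) := expH h
theorem mono (h : ∀ x ∈ Γ, x ∈ Γ') (d : SC Γ φ) : SC Γ' φ := transH (conj_sub h) d
theorem andI (h1 : SC Γ φ) (h2 : SC Γ ψ) : SC Γ (φ.and ψ) := andIH h1 h2
theorem andE1 (h : SC Γ (φ.and ψ)) : SC Γ φ := mp (thm (iGLH.taut (IPC.andE1 _ _))) h
theorem andE2 (h : SC Γ (φ.and ψ)) : SC Γ ψ := mp (thm (iGLH.taut (IPC.andE2 _ _))) h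

theorem boxConj {l : List Formula} (h : ∀ φ ∈ l, SC Γ φ.box) : SC Γ (conj l).box := by
  induction l with
  | nil => exact thm (iGLH.nec (iGLH.taut (IPC.impRefl .bot)))
  | cons ψ l ih =>
    exact mp (mp (thm boxAnd2) (h ψ (by simp))) (ih fun φ hφ => h φ (by simp [hφ]))

end SC

/-- Conjunction of a multiset. -/
noncomputable def cj (M : Multiset Formula) : Formula := conj M.toList

theorem cj_mem {M : Multiset Formula} {φ : Formula} (h : φ ∈ M) : iGLH ((cj M).imp φ) :=
  conj_mem (Multiset.mem_toList.mpr h)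

theorem cj_sub {M N : Multiset Formula} (h : ∀ x ∈ M, x ∈ N) : iGLH ((cj N).imp (cj M)) :=
  conj_sub fun x hx => Multiset.mem_toList.mpr (h x (Multiset.mem_toList.mp hx))

theorem SC.cjIntro {Γ : List Formula} {M : Multiset Formula}
    (h : ∀ φ ∈ M, SC Γ φ) : SC Γ (cj M) :=
  conj_intro fun φ hφ => h φ (Multiset.mem_toList.mp hφ)

theorem SC.cjBoxConj {Γ : List Formula} {M : Multiset Formula}
    (h : ∀ φ ∈ M, SC Γ φ.box) : SC Γ (cj M).box :=
  SC.boxConj fun φ hφ => h φ (Multiset.mem_toList.mp hφ)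

/-- Canonical interpretation of a sequent. -/
noncomputable def cI (S : Sequent) : Formula := (cj S.1).imp S.2

theorem interp_imp_cI {S : Sequent} {ψ : Formula} (h : InterpOf S ψ) : iGLH (ψ.imp (cI S)) := by
  obtain ⟨l, hl, rfl⟩ := h
  refine impMono (conj_sub fun x hx => Multiset.mem_toList.mpr ?_)
  rw [← hl]
  simpa using hx

/-- All assumption-leaf sequents of a tree. -/
def asmAll : FinTree Label → List Sequent
  | .node (S, L) ts =>
      if L = .assump then [S] else ts.attach.flatMap (fun t => asmAll t.1)
decreasing_by simp_wf; exact Nat.lt_add_left _ (List.sizeOf_lt_of_mem t.2)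

/-- Assumption-leaf sequents with no `R_K4` strictly below (within the tree). -/
def asmFree : FinTree Label → List Sequent
  | .node (S, L) ts =>
      if L = .assump then [S]
      else if L = .rk4 then []
      else ts.attach.flatMap (fun t => asmFree t.1)
decreasing_by simp_wf; exact Nat.lt_add_left _ (List.sizeOf_lt_of_mem t.2)

theorem asmAll_node_ne {S : Sequent} {L : RulName} (hL : L ≠ .assump)
    (ts : List (FinTree Label)) :
    asmAll (.node (S, L) ts) = ts.flatMap asmAll := by
  rw [asmAll]; simp [hL, List.flatMap_subtype]

theorem FinTree.ind {A : Type} {P : FinTree A → Prop}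
    (h : ∀ a ts, (∀ t ∈ ts, P t) → P (.node a ts)) : ∀ t, P t
  | .node a ts => h a ts (fun t ht => FinTree.ind h t)
decreasing_by simp_wf; exact Nat.lt_add_left _ (List.sizeOf_lt_of_mem ht)

theorem asmFree_node_ne {S : Sequent} {L : RulName} (h1 : L ≠ .assump) (h2 : L ≠ .rk4)
    (ts : List (FinTree Label)) :
    asmFree (.node (S, L) ts) = ts.flatMap asmFree := by
  rw [asmFree]; simp [h1, h2, List.flatMap_subtype]

theorem asmFree_sub_asmAll : ∀ (u : FinTree Label), ∀ x ∈ asmFree u, x ∈ asmAll u := by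
  refine FinTree.ind ?_
  rintro ⟨S, L⟩ ts ih x hx
  by_cases h1 : L = .assump
  · subst h1; rw [asmFree] at hx; rw [asmAll]; simpa using hx
  by_cases h2 : L = .rk4
  · rw [asmFree] at hx; simp [h1, h2] at hx
  · rw [asmFree_node_ne h1 h2] at hx
    rw [asmAll_node_ne h1]
    simp only [List.mem_flatMap] at hx ⊢
    obtain ⟨t, ht, hxt⟩ := hx
    exact ⟨t, ht, ih t ht x hxt⟩

theorem subtreeAt_nil {A : Type} {t u : FinTree A} (h : SubtreeAt t [] u) : u = t := by
  cases h; rfl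

theorem subtreeAt_cons {A : Type} {a : A} {ts : List (FinTree A)} {i : ℕ} {s : List ℕ}
    {u : FinTree A} (h : SubtreeAt (.node a ts) (i :: s) u) :
    ∃ t, ts[i]? = some t ∧ SubtreeAt t s u := by
  cases h; exact ⟨_, ‹_›, ‹_›⟩

theorem subtreeAt_unique {A : Type} {t : FinTree A} {s : List ℕ} {u v : FinTree A}
    (h1 : SubtreeAt t s u) (h2 : SubtreeAt t s v) : u = v := by
  induction h1 with
  | refl => exact (subtreeAt_nil h2).symm
  | step hi hsub ih =>
    obtain ⟨t', hi', hsub'⟩ := subtreeAt_cons h2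
    rw [hi] at hi'
    injection hi' with h
    subst h
    exact ih hsub'

theorem assumpLeafAt_unique {π : FinTree Label} {s : List ℕ} {S S' : Sequent}
    (h : AssumpLeafAt π s S) (h' : AssumpLeafAt π s S') : S = S' := by
  obtain ⟨u, hu, hl⟩ := h
  obtain ⟨v, hv, hl'⟩ := h'
  have := subtreeAt_unique hu hv
  subst this
  rw [hl] at hl'
  exact (Prod.mk.injEq _ _ _ _).mp hl' |>.1

theorem asmAll_spec : ∀ u : FinTree Label, ∀ S ∈ asmAll u, ∃ s, AssumpLeafAt u s S := by
  refine FinTree.ind ?_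
  rintro ⟨S0, L⟩ ts ih S hS
  by_cases h1 : L = .assump
  · subst h1
    rw [asmAll] at hS
    simp at hS
    subst hS
    exact ⟨[], _, .refl _, rfl⟩
  · rw [asmAll_node_ne h1] at hS
    simp only [List.mem_flatMap] at hS
    obtain ⟨t, ht, hSt⟩ := hS
    obtain ⟨i, hi⟩ := List.mem_iff_getElem?.mp ht
    obtain ⟨s, u, hsub, hlab⟩ := ih t ht S hSt
    exact ⟨i :: s, u, .step hi hsub, hlab⟩

theorem asmFree_spec : ∀ u : FinTree Label, ∀ S ∈ asmFree u,
    ∃ s, AssumpLeafAt u s S ∧ ¬ BoxedAssump u s := by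
  refine FinTree.ind ?_
  rintro ⟨S0, L⟩ ts ih S hS
  by_cases h1 : L = .assump
  · subst h1
    rw [asmFree] at hS
    simp at hS
    subst hS
    refine ⟨[], ⟨_, .refl _, rfl⟩, ?_⟩
    rintro ⟨w, hpre, hne, -⟩
    exact hne (List.prefix_nil.mp hpre)
  by_cases h2 : L = .rk4
  · rw [asmFree] at hS
    simp [h1, h2] at hS
  · rw [asmFree_node_ne h1 h2] at hS
    simp only [List.mem_flatMap] at hS
    obtain ⟨t, ht, hSt⟩ := hS
    obtain ⟨i, hi⟩ := List.mem_iff_getElem?.mp ht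
    obtain ⟨s, hleaf, hnb⟩ := ih t ht S hSt
    obtain ⟨u, hsub, hlab⟩ := hleaf
    refine ⟨i :: s, ⟨u, .step hi hsub, hlab⟩, ?_⟩
    rintro ⟨w, hpre, hne, hrn⟩
    match w, hpre, hne, hrn with
    | [], _, _, hrn =>
      obtain ⟨v, hv, hvl⟩ := hrn
      rw [subtreeAt_nil hv] at hvl
      exact h2 hvl
    | j :: w', hpre, hne, hrn =>
      obtain ⟨hji, hw's⟩ := List.cons_prefix_cons.mp hpre
      subst hji
      obtain ⟨v, hv, hvl⟩ := hrn
      obtain ⟨t', hit', hv'⟩ := subtreeAt_cons hv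
      rw [hi] at hit'
      injection hit' with hh
      subst hh
      exact hnb ⟨w', hw's, fun h => hne (by rw [h]), ⟨v, hv', hvl⟩⟩

/-! ### multiset conjunction, SC helpers -/

theorem SC.wk {Γ : List Formula} {φ ψ : Formula} (h : SC Γ φ) : SC (ψ :: Γ) φ :=
  SC.mono (fun x hx => List.mem_cons_of_mem _ hx) h

theorem SC.cj_cons_e1 {Γ : List Formula} {φ : Formula} {M : Multiset Formula}
    (h : SC Γ (cj (φ ::ₘ M))) : SC Γ φ :=
  SC.mp (SC.thm (cj_mem (Multiset.mem_cons_self φ M))) h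

theorem SC.cj_cons_e2 {Γ : List Formula} {φ : Formula} {M : Multiset Formula}
    (h : SC Γ (cj (φ ::ₘ M))) : SC Γ (cj M) :=
  SC.mp (SC.thm (cj_sub fun x hx => Multiset.mem_cons_of_mem hx)) h

theorem SC.cj_cons_i {Γ : List Formula} {φ : Formula} {M : Multiset Formula}
    (h1 : SC Γ φ) (h2 : SC Γ (cj M)) : SC Γ (cj (φ ::ₘ M)) :=
  SC.cjIntro fun x hx => by
    rcases Multiset.mem_cons.mp hx with rfl | hx
    · exact h1
    · exact SC.mp (SC.thm (cj_mem hx)) h2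

/-! ### hypotheses of a derivation tree -/

noncomputable def hyps (u : FinTree Label) : List Formula :=
  (asmFree u).map cI ++ (asmAll u).map (fun S => (cI S).box)

theorem hyps_sub {S : Sequent} {L : RulName} {ts : List (FinTree Label)}
    (h1 : L ≠ .assump) (h2 : L ≠ .rk4) {t : FinTree Label} (ht : t ∈ ts) :
    ∀ x ∈ hyps t, x ∈ hyps (.node (S, L) ts) := by
  intro x hx
  simp only [hyps, List.mem_append, List.mem_map] at hx ⊢
  rw [asmFree_node_ne h1 h2, asmAll_node_ne h1]
  rcases hx with ⟨Sx, hSx, rfl⟩ | ⟨Sx, hSx, rfl⟩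
  · exact Or.inl ⟨Sx, List.mem_flatMap.mpr ⟨t, ht, hSx⟩, rfl⟩
  · exact Or.inr ⟨Sx, List.mem_flatMap.mpr ⟨t, ht, hSx⟩, rfl⟩

theorem map_eq_one {α β : Type*} {f : α → β} {ts : List α} {x : β} (h : ts.map f = [x]) :
    ∃ t, ts = [t] ∧ f t = x := by
  cases ts with
  | nil => simp at h
  | cons a l =>
    cases l with
    | nil => simp at h; exact ⟨a, rfl, h⟩
    | cons b m => simp at h

theorem map_eq_two {α β : Type*} {f : α → β} {ts : List α} {x y : β}
    (h : ts.map f = [x, y]) : ∃ t1 t2, ts = [t1, t2] ∧ f t1 = x ∧ f t2 = y := by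
  cases ts with
  | nil => simp at h
  | cons a l =>
    cases l with
    | nil => simp at h
    | cons b m =>
      cases m with
      | nil => simp at h; exact ⟨a, b, rfl, h.1, h.2⟩
      | cons c k => simp at h

/-! ### main soundness lemma -/

theorem main : ∀ {u : FinTree Label}, IsDeriv iK4Name u → SC (hyps u) (cI u.label.1) := by
  intro u h
  induction h with
  | assump S =>
    refine SC.ax ?_
    have h1 : asmFree (.node (S, .assump) []) = [S] := by rw [asmFree]; simp
    have h2 : asmAll (.node (S, .assump) []) = [S] := by rw [asmAll]; simp
    show cI (S, RulName.assump).1 ∈ _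
    rw [hyps, h1, h2]
    simp
  | rule S L ts hL hr hts ih =>
    have hLa : L ≠ .assump := hL.2
    show SC (hyps (.node (S, L) ts)) (cI S)
    have hIH : ∀ t ∈ ts, L ≠ .rk4 → SC (hyps (.node (S, L) ts)) (cI t.label.1) :=
      fun t ht h2 => SC.mono (hyps_sub hLa h2 ht) (ih t ht)
    generalize hprem : (ts.map fun t => t.label.1) = prems at hr
    revert hIH
    generalize hEq : hyps (.node (S, L) ts) = Γc
    intro hIH
    cases hr with
    | prop Γ' p =>
      refine SC.intro ?_
      exact SC.cj_cons_e1 (SC.ax (List.mem_cons_self))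
    | absurd Γ' ψ =>
      refine SC.intro ?_
      exact SC.mp (SC.thm (iGLH.taut (IPC.efq ψ)))
        (SC.cj_cons_e1 (SC.ax (List.mem_cons_self)))
    | andL Γ' φ ψ χ =>
      obtain ⟨t, rfl, ht1⟩ := map_eq_one hprem
      have IH := hIH t (by simp) (by decide)
      rw [ht1] at IH
      refine SC.intro ?_
      have hA : SC (cj ((φ.and ψ) ::ₘ Γ') :: Γc) (cj ((φ.and ψ) ::ₘ Γ')) :=
        SC.ax (List.mem_cons_self)
      have hfg := SC.cj_cons_e1 hA
      have hΓ := SC.cj_cons_e2 hA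
      exact SC.mp IH.wk (SC.cj_cons_i (SC.andE1 hfg) (SC.cj_cons_i (SC.andE2 hfg) hΓ))
    | andR Γ' φ ψ =>
      obtain ⟨t1, t2, rfl, ht1, ht2⟩ := map_eq_two hprem
      have IH1 := hIH t1 (by simp) (by decide)
      rw [ht1] at IH1
      have IH2 := hIH t2 (by simp) (by decide)
      rw [ht2] at IH2
      refine SC.intro ?_
      have hΓ : SC (cj Γ' :: Γc) (cj Γ') := SC.ax (List.mem_cons_self)
      exact SC.andI (SC.mp IH1.wk hΓ) (SC.mp IH2.wk hΓ)
    | orL Γ' φ ψ χ =>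
      obtain ⟨t1, t2, rfl, ht1, ht2⟩ := map_eq_two hprem
      have IH1 := hIH t1 (by simp) (by decide)
      rw [ht1] at IH1
      have IH2 := hIH t2 (by simp) (by decide)
      rw [ht2] at IH2
      refine SC.intro ?_
      have hA : SC (cj ((φ.or ψ) ::ₘ Γ') :: Γc) (cj ((φ.or ψ) ::ₘ Γ')) :=
        SC.ax (List.mem_cons_self)
      have hor := SC.cj_cons_e1 hA
      have hΓ := SC.cj_cons_e2 hA
      have d1 : SC (cj ((φ.or ψ) ::ₘ Γ') :: Γc) (φ.imp χ) :=
        SC.intro (SC.mp IH1.wk.wk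
          (SC.cj_cons_i (SC.ax (List.mem_cons_self)) hΓ.wk))
      have d2 : SC (cj ((φ.or ψ) ::ₘ Γ') :: Γc) (ψ.imp χ) :=
        SC.intro (SC.mp IH2.wk.wk
          (SC.cj_cons_i (SC.ax (List.mem_cons_self)) hΓ.wk))
      exact SC.mp (SC.mp (SC.mp (SC.thm (iGLH.taut (IPC.orE φ ψ χ))) d1) d2) hor
    | orR0 Γ' φ ψ =>
      obtain ⟨t, rfl, ht1⟩ := map_eq_one hprem
      have IH := hIH t (by simp) (by decide)
      rw [ht1] at IH
      refine SC.intro ?_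
      exact SC.mp (SC.thm (iGLH.taut (IPC.orI1 φ ψ)))
        (SC.mp IH.wk (SC.ax (List.mem_cons_self)))
    | orR1 Γ' φ ψ =>
      obtain ⟨t, rfl, ht1⟩ := map_eq_one hprem
      have IH := hIH t (by simp) (by decide)
      rw [ht1] at IH
      refine SC.intro ?_
      exact SC.mp (SC.thm (iGLH.taut (IPC.orI2 φ ψ)))
        (SC.mp IH.wk (SC.ax (List.mem_cons_self)))
    | impL Γ' φ ψ χ =>
      obtain ⟨t1, t2, rfl, ht1, ht2⟩ := map_eq_two hprem
      have IH1 := hIH t1 (by simp) (by decide)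
      rw [ht1] at IH1
      have IH2 := hIH t2 (by simp) (by decide)
      rw [ht2] at IH2
      refine SC.intro ?_
      have hA : SC (cj ((φ.imp ψ) ::ₘ Γ') :: Γc) (cj ((φ.imp ψ) ::ₘ Γ')) :=
        SC.ax (List.mem_cons_self)
      have himp := SC.cj_cons_e1 hA
      have hΓ := SC.cj_cons_e2 hA
      have hφ : SC (cj ((φ.imp ψ) ::ₘ Γ') :: Γc) φ := SC.mp IH1.wk hA
      have hψ : SC (cj ((φ.imp ψ) ::ₘ Γ') :: Γc) ψ := SC.mp himp hφ
      exact SC.mp IH2.wk (SC.cj_cons_i hψ hΓ)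
    | impR Γ' φ ψ =>
      obtain ⟨t, rfl, ht1⟩ := map_eq_one hprem
      have IH := hIH t (by simp) (by decide)
      rw [ht1] at IH
      refine SC.intro (SC.intro ?_)
      exact SC.mp IH.wk.wk
        (SC.cj_cons_i (SC.ax (List.mem_cons_self))
          (SC.ax (List.mem_cons_of_mem _ (List.mem_cons_self))))
    | rk4 Pi Δ χ =>
      obtain ⟨t, rfl, ht1⟩ := map_eq_one hprem
      rw [← hEq]
      have hΓc : hyps (FinTree.node ((Pi + boxM Δ, Formula.box χ), RulName.rk4) [t])
          = (asmAll t).map (fun S => (cI S).box) := by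
        have hF : asmFree (FinTree.node ((Pi + boxM Δ, Formula.box χ), RulName.rk4) [t]) = [] := by
          rw [asmFree]; simp
        have hA : asmAll (FinTree.node ((Pi + boxM Δ, Formula.box χ), RulName.rk4) [t])
            = asmAll t := by
          rw [asmAll_node_ne (by decide)]; simp
        rw [hyps, hF, hA]; simp
      rw [hΓc]
      have IH : SC (hyps t) ((cj (bbox Δ)).imp χ) := by
        have := ih t (by simp)
        rwa [ht1] at this
      have stepA : SC ((asmAll t).map (fun S => (cI S).box)) (conj (hyps t)).box := by
        refine SC.boxConj fun x hx => ?_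
        simp only [hyps, List.mem_append, List.mem_map] at hx
        rcases hx with ⟨Sx, hSx, rfl⟩ | ⟨Sx, hSx, rfl⟩
        · exact SC.ax (List.mem_map.mpr ⟨Sx, asmFree_sub_asmAll t Sx hSx, rfl⟩)
        · exact SC.mp (SC.thm (four _)) (SC.ax (List.mem_map.mpr ⟨Sx, hSx, rfl⟩))
      have stepC : SC ((asmAll t).map (fun S => (cI S).box)) ((cj (bbox Δ)).imp χ).box :=
        SC.mp (SC.thm (boxK IH)) stepA
      have stepD : SC ((asmAll t).map (fun S => (cI S).box)) ((cj (bbox Δ)).box.imp χ.box) :=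
        SC.mp (SC.thm (iGLH.k _ _)) stepC
      refine SC.intro ?_
      have hbox : SC (cj (Pi + boxM Δ) :: (asmAll t).map (fun S => (cI S).box))
          (cj (boxM Δ)) :=
        SC.mp (SC.thm (cj_sub fun x hx => Multiset.mem_add.mpr (Or.inr hx)))
          (SC.ax (List.mem_cons_self))
      have hbb : SC (cj (Pi + boxM Δ) :: (asmAll t).map (fun S => (cI S).box))
          (cj (bbox Δ)).box := by
        refine SC.cjBoxConj fun x hx => ?_
        rw [bbox] at hx
        rcases Multiset.mem_add.mp hx with h | h
        · exact SC.mp (SC.thm (cj_mem (Multiset.mem_map.mpr ⟨x, h, rfl⟩))) hbox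
        · obtain ⟨δ, hδ, rfl⟩ := Multiset.mem_map.mp h
          exact SC.mp (SC.thm (four δ)) (SC.mp (SC.thm (cj_mem h)) hbox)
      exact SC.mp stepD.wk hbb
    | rgl Pi Δ χ => exact absurd rfl hL.1

end CDI
/-- Let `(π, b)` be a cyclic derivation of `Γ ⇒ φ` in `iK4_Seq` (`b` a partial backlink
function), and let `nbs` (resp. `bs`) enumerate, without repetition, the non-boxed
(resp. boxed) assumption leaves of `π` together with interpretations of their sequents. Then
`iGL ⊢ (⋀{ S_a^# ∧ □(S_a^#) : a non-boxed } ∧ ⋀{ □(S_a^#) : a boxed }) → (Γ ⇒ φ)^#`. -/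
theorem cyclic_deriv_interp
    (π : FinTree Label) (b : List ℕ → Option (List ℕ))
    (hder : IsDeriv iK4Name π)
    (hb : ∀ s t, b s = some t → IsAssumpLeaf π s ∧ GoodBacklink π s t)
    (Γ : List Formula) (φ : Formula)
    (hconc : π.label.1 = ((↑Γ : Multiset Formula), φ))
    (nbs bs : List (List ℕ × Formula))
    (hnbs_mem : ∀ s : List ℕ, (∃ ψ, (s, ψ) ∈ nbs) ↔ (IsAssumpLeaf π s ∧ ¬ BoxedAssump π s))
    (hbs_mem : ∀ s : List ℕ, (∃ ψ, (s, ψ) ∈ bs) ↔ (IsAssumpLeaf π s ∧ BoxedAssump π s))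
    (hnbs_nodup : (nbs.map Prod.fst).Nodup)
    (hbs_nodup : (bs.map Prod.fst).Nodup)
    (hnbs_interp : ∀ p ∈ nbs, ∃ S, AssumpLeafAt π p.1 S ∧ InterpOf S p.2)
    (hbs_interp : ∀ p ∈ bs, ∃ S, AssumpLeafAt π p.1 S ∧ InterpOf S p.2) :
    iGLH (((conj (nbs.map fun p => (p.2).and (p.2.box))).and
           (conj (bs.map fun p => p.2.box))).imp ((conj Γ).imp φ)) := by
  classical
  have hmain := CDI.main hder
  set Hs : List Formula :=
    (nbs.map fun p => (p.2).and (p.2.box)) ++ (bs.map fun p => p.2.box) with hHs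
  have hstep : ∀ x ∈ CDI.hyps π, CDI.SC Hs x := by
    intro x hx
    simp only [CDI.hyps, List.mem_append, List.mem_map] at hx
    rcases hx with ⟨S, hS, rfl⟩ | ⟨S, hS, rfl⟩
    · obtain ⟨s, hleaf, hnb⟩ := CDI.asmFree_spec π S hS
      obtain ⟨ψ, hmem⟩ := (hnbs_mem s).mpr ⟨⟨S, hleaf⟩, hnb⟩
      obtain ⟨S', hleaf', hint⟩ := hnbs_interp _ hmem
      obtain rfl := CDI.assumpLeafAt_unique hleaf' hleaf
      refine CDI.SC.mp (CDI.SC.thm (CDI.interp_imp_cI hint)) ?_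
      exact CDI.SC.andE1 (ψ := ψ.box)
        (CDI.SC.ax (List.mem_append_left _ (List.mem_map.mpr ⟨(s, ψ), hmem, rfl⟩)))
    · obtain ⟨s, hleaf⟩ := CDI.asmAll_spec π S hS
      by_cases hbx : BoxedAssump π s
      · obtain ⟨ψ, hmem⟩ := (hbs_mem s).mpr ⟨⟨S, hleaf⟩, hbx⟩
        obtain ⟨S', hleaf', hint⟩ := hbs_interp _ hmem
        obtain rfl := CDI.assumpLeafAt_unique hleaf' hleaf
        refine CDI.SC.mp (CDI.SC.thm (CDI.boxK (CDI.interp_imp_cI hint))) ?_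
        exact CDI.SC.ax (List.mem_append_right _ (List.mem_map.mpr ⟨(s, ψ), hmem, rfl⟩))
      · obtain ⟨ψ, hmem⟩ := (hnbs_mem s).mpr ⟨⟨S, hleaf⟩, hbx⟩
        obtain ⟨S', hleaf', hint⟩ := hnbs_interp _ hmem
        obtain rfl := CDI.assumpLeafAt_unique hleaf' hleaf
        refine CDI.SC.mp (CDI.SC.thm (CDI.boxK (CDI.interp_imp_cI hint))) ?_
        exact CDI.SC.andE2 (φ := ψ)
          (CDI.SC.ax (List.mem_append_left _ (List.mem_map.mpr ⟨(s, ψ), hmem, rfl⟩)))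
  have h2 : iGLH ((conj Hs).imp (CDI.cI π.label.1)) :=
    CDI.transH (CDI.conj_intro hstep) hmain
  rw [hconc] at h2
  have h4 : iGLH ((CDI.cI ((↑Γ : Multiset Formula), φ)).imp ((conj Γ).imp φ)) :=
    CDI.impMono (CDI.conj_sub fun x hx => by
      have := Multiset.mem_toList.mp hx
      simpa using this)
  have h5 : iGLH ((((conj (nbs.map fun p => (p.2).and (p.2.box))).and
        (conj (bs.map fun p => p.2.box)))).imp (conj Hs)) :=
    CDI.conj_intro fun x hx => by
      rcases List.mem_append.mp hx with h | h
      · exact CDI.transH (iGLH.taut (IPC.andE1 _ _)) (CDI.conj_mem h)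
      · exact CDI.transH (iGLH.taut (IPC.andE2 _ _)) (CDI.conj_mem h)
  exact CDI.transH h5 (CDI.transH h2 h4)
end

section
/- Soundness and completeness of iGL: ⊢_iGL φ if and only if φ is valid on every intuitionistic Kripke frame that is transitive, converse well-founded, and brilliant. -/
/-- An intuitionistic Kripke frame: a nonempty set with a partial order `≤`, a relation `R`,
such that `≤;R ⊆ R`. -/
structure IKFrame where
  W : Type
  nonempty : Nonempty W
  le : W → W → Prop
  R : W → W → Prop
  po : IsPartialOrder W le
  le_comp_R : ∀ {x y z : W}, le x y → R y z → R x z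

/-- A valuation is monotone when it is upward closed along `≤`. -/
def MonotoneVal (F : IKFrame) (V : ℕ → F.W → Prop) : Prop :=
  ∀ p w v, F.le w v → V p w → V p v

/-- The satisfaction relation on an intuitionistic Kripke model. -/
def Sat (F : IKFrame) (V : ℕ → F.W → Prop) : F.W → Formula → Prop
  | w, .var p => V p w
  | _, .bot => False
  | w, .and φ ψ => Sat F V w φ ∧ Sat F V w ψ
  | w, .or φ ψ => Sat F V w φ ∨ Sat F V w ψ
  | w, .imp φ ψ => ∀ v, F.le w v → Sat F V v φ → Sat F V v ψ
  | w, .box φ => ∀ v, F.R w v → Sat F V v φ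

/-- `φ` is valid on the frame `F`: satisfied at every world under every monotone valuation. -/
def ValidOn (F : IKFrame) (φ : Formula) : Prop :=
  ∀ V : ℕ → F.W → Prop, MonotoneVal F V → ∀ w : F.W, Sat F V w φ

/-- A transitive frame: `R;R ⊆ R`. -/
def IKFrame.Transitive (F : IKFrame) : Prop :=
  ∀ {x y z : F.W}, F.R x y → F.R y z → F.R x z

/-- A brilliant frame: `R;≤ ⊆ R`. -/
def IKFrame.Brilliant (F : IKFrame) : Prop :=
  ∀ {x y z : F.W}, F.R x y → F.le y z → F.R x z

/-- A converse well-founded frame: `R` has no infinite ascending chain. -/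
def IKFrame.ConverseWellFounded (F : IKFrame) : Prop :=
  ¬ ∃ f : ℕ → F.W, ∀ n : ℕ, F.R (f n) (f (n + 1))

/-!
Soundness: on a transitive frame whose converse `R` is well-founded, Löb's axiom is proved by
`R`-induction; the remaining axioms and rules are routine.

Completeness: a non-theorem `φ` fails in a finite canonical model whose worlds are the prime
theories inside the subformulas of `φ`, ordered by inclusion, with `w R v` when `v` contains `χ`
and `□χ` for every `□χ ∈ w` and some boxed formula of `v` is missing from `w`. This relation is
transitive, brilliant and irreflexive, hence converse well-founded on a finite frame. In the box
case of the truth lemma, Löb's axiom enters through the rule `Γ, □Γ, □a ⊢ a ⟹ □Γ ⊢ □a`.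
-/

/-- Necessitation applies to theorems only, not to hypotheses, so the deduction theorem holds. -/
inductive Deriv (Γ : Set Formula) : Formula → Prop
  | ax {ψ} : ψ ∈ Γ → Deriv Γ ψ
  | thm {ψ} : iGLH ψ → Deriv Γ ψ
  | mp {ψ χ} : Deriv Γ (ψ.imp χ) → Deriv Γ ψ → Deriv Γ χ

namespace Deriv

variable {Γ Δ : Set Formula} {φ ψ : Formula}

theorem taut (h : IPC ψ) : Deriv Γ ψ := .thm (.taut h)

theorem mono (h : Γ ⊆ Δ) (d : Deriv Γ ψ) : Deriv Δ ψ := by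
  induction d with
  | ax hψ => exact .ax (h hψ)
  | thm hψ => exact .thm hψ
  | mp _ _ ih₁ ih₂ => exact .mp ih₁ ih₂

theorem cut (h : ∀ χ ∈ Δ, Deriv Γ χ) (d : Deriv Δ ψ) : Deriv Γ ψ := by
  induction d with
  | ax hψ => exact h _ hψ
  | thm hψ => exact .thm hψ
  | mp _ _ ih₁ ih₂ => exact .mp ih₁ ih₂

theorem imp_intro (d : Deriv (insert φ Γ) ψ) : Deriv Γ (φ.imp ψ) := by
  induction d with
  | @ax ψ hψ =>
    rcases hψ with rfl | hψ
    · exact .taut (.mp (.mp (.a2 ψ (ψ.imp ψ) ψ) (.a1 ψ (ψ.imp ψ))) (.a1 ψ ψ))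
    · exact .mp (.taut (.a1 ψ φ)) (.ax hψ)
  | @thm ψ hψ => exact .mp (.taut (.a1 ψ φ)) (.thm hψ)
  | @mp ψ χ _ _ ih₁ ih₂ => exact .mp (.mp (.taut (.a2 φ ψ χ)) ih₁) ih₂

theorem iGLH_of_empty (d : Deriv ∅ ψ) : iGLH ψ := by
  induction d with
  | ax hψ => exact absurd hψ (Set.notMem_empty _)
  | thm hψ => exact hψ
  | mp _ _ ih₁ ih₂ => exact ih₁.mp ih₂

theorem box (d : Deriv Γ ψ) : Deriv (Formula.box '' Γ) ψ.box := by
  induction d with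
  | ax hψ => exact .ax ⟨_, hψ, rfl⟩
  | thm hψ => exact .thm hψ.nec
  | mp _ _ ih₁ ih₂ => exact .mp (.mp (.thm (.k _ _)) ih₁) ih₂

end Deriv

namespace iGLH

variable {a b c : Formula}

theorem imp_trans (h₁ : iGLH (a.imp b)) (h₂ : iGLH (b.imp c)) : iGLH (a.imp c) :=
  Deriv.iGLH_of_empty <| Deriv.imp_intro <| .mp (.thm h₂) (.mp (.thm h₁) (.ax (by simp)))

theorem box_mono (h : iGLH (a.imp b)) : iGLH (a.box.imp b.box) := (k a b).mp h.nec

/-- Löb's axiom for `a ∧ □a` yields axiom 4. -/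
theorem four (a : Formula) : iGLH (a.box.imp a.box.box) := by
  have h : iGLH (a.imp ((a.and a.box).box.imp (a.and a.box))) :=
    Deriv.iGLH_of_empty <| Deriv.imp_intro <| Deriv.imp_intro <|
      .mp (.mp (.taut (.andI a a.box)) (.ax (by simp)))
        (.mp (.thm (box_mono (.taut (.andE1 a a.box)))) (.ax (by simp)))
  exact (box_mono h).imp_trans ((lob _).imp_trans (box_mono (.taut (.andE2 a a.box))))

end iGLH

theorem Deriv.box_of_lob {Γ : Set Formula} {a : Formula}
    (d : Deriv (insert a.box (Γ ∪ Formula.box '' Γ)) a) : Deriv (Formula.box '' Γ) a.box := by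
  have hboxed : ∀ χ ∈ Formula.box '' (Γ ∪ Formula.box '' Γ), Deriv (Formula.box '' Γ) χ := by
    rintro _ ⟨χ, hχ | ⟨χ, hχ, rfl⟩, rfl⟩
    · exact .ax ⟨χ, hχ, rfl⟩
    · exact .mp (.thm (iGLH.four χ)) (.ax ⟨χ, hχ, rfl⟩)
  exact .mp (.thm (.lob a)) (d.imp_intro.box.cut hboxed)

theorem IKFrame.converseWellFounded_iff (F : IKFrame) :
    F.ConverseWellFounded ↔ WellFounded (flip F.R) := by
  rw [wellFounded_iff_isEmpty_descending_chain, isEmpty_subtype]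
  exact not_exists

section Soundness

variable {F : IKFrame} {V : ℕ → F.W → Prop}

theorem Sat.mono (hV : MonotoneVal F V) {ψ : Formula} {w v : F.W} (h : F.le w v) :
    Sat F V w ψ → Sat F V v ψ := by
  induction ψ generalizing w v with
  | var p => exact hV p w v h
  | bot => exact id
  | and a b iha ihb => exact fun hab => ⟨iha h hab.1, ihb h hab.2⟩
  | or a b iha ihb => exact Or.imp (iha h) (ihb h)
  | imp a b => exact fun hab u hvu => hab u (F.po.trans _ _ _ h hvu)
  | box a => exact fun ha u hvu => ha u (F.le_comp_R h hvu)

theorem Sat.mp {a b : Formula} {w : F.W} (hab : Sat F V w (a.imp b)) (ha : Sat F V w a) :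
    Sat F V w b :=
  hab w (F.po.refl w) ha

theorem IPC.sound {ψ : Formula} (h : IPC ψ) (hV : MonotoneVal F V) (w : F.W) : Sat F V w ψ := by
  have trans : ∀ {x y z : F.W}, F.le x y → F.le y z → F.le x z := F.po.trans _ _ _
  induction h generalizing w with
  | a1 => exact fun v _ ha u hvu _ => Sat.mono hV hvu ha
  | a2 => exact fun v _ h₁ u hvu h₂ x hux h₃ => Sat.mp (h₁ x (trans hvu hux) h₃) (h₂ x hux h₃)
  | andI => exact fun v _ ha u hvu hb => ⟨Sat.mono hV hvu ha, hb⟩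
  | andE1 => exact fun _ _ h => h.1
  | andE2 => exact fun _ _ h => h.2
  | orI1 => exact fun _ _ => Or.inl
  | orI2 => exact fun _ _ => Or.inr
  | orE => exact fun v _ h₁ u hvu h₂ x hux h₃ => h₃.elim (h₁ x (trans hvu hux)) (h₂ x hux)
  | efq => exact fun _ _ => False.elim
  | mp _ _ ih₁ ih₂ => exact Sat.mp (ih₁ w) (ih₂ w)

theorem iGLH.sound {ψ : Formula} (h : iGLH ψ) (ht : F.Transitive) (hc : F.ConverseWellFounded) :
    ValidOn F ψ := by
  intro V hV w
  induction h generalizing w with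
  | taut h => exact h.sound hV w
  | k a b => exact fun v _ h₁ u hvu h₂ x hux => Sat.mp (h₁ x (F.le_comp_R hvu hux)) (h₂ x hux)
  | lob a =>
    intro v _ hlob u
    induction u using ((IKFrame.converseWellFounded_iff F).1 hc).induction with
    | _ u ih => exact fun hvu => Sat.mp (hlob u hvu) fun x hux => ih x hux (ht hvu hux)
  | mp _ _ ih₁ ih₂ => exact Sat.mp (ih₁ w) (ih₂ w)
  | nec _ ih => exact fun v _ => ih v

end Soundness

def Formula.subf : Formula → Finset Formula
  | .var p => {.var p}
  | .bot => {.bot}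
  | .imp a b => insert (a.imp b) (a.subf ∪ b.subf)
  | .and a b => insert (a.and b) (a.subf ∪ b.subf)
  | .or a b => insert (a.or b) (a.subf ∪ b.subf)
  | .box a => insert a.box a.subf

theorem Formula.mem_subf_self (φ : Formula) : φ ∈ φ.subf := by
  cases φ <;> simp [Formula.subf]

theorem Formula.subf_subset_of_mem {ψ φ : Formula} (h : ψ ∈ φ.subf) : ψ.subf ⊆ φ.subf := by
  induction φ with
  | var | bot => simp_all [Formula.subf]
  | imp a b iha ihb | and a b iha ihb | or a b iha ihb | box a iha =>
    simp only [Formula.subf, Finset.mem_insert, Finset.mem_union] at h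
    rcases h with rfl | h <;> grind [Formula.subf]

structure SubClosed (Φ : Finset Formula) : Prop where
  imp : ∀ a b : Formula, a.imp b ∈ Φ → a ∈ Φ ∧ b ∈ Φ
  and : ∀ a b : Formula, a.and b ∈ Φ → a ∈ Φ ∧ b ∈ Φ
  or : ∀ a b : Formula, a.or b ∈ Φ → a ∈ Φ ∧ b ∈ Φ
  box : ∀ a : Formula, a.box ∈ Φ → a ∈ Φ

theorem Formula.subClosed_subf (φ : Formula) : SubClosed φ.subf where
  imp _ _ h := by grind [Formula.subf, Formula.mem_subf_self, Formula.subf_subset_of_mem h]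
  and _ _ h := by grind [Formula.subf, Formula.mem_subf_self, Formula.subf_subset_of_mem h]
  or _ _ h := by grind [Formula.subf, Formula.mem_subf_self, Formula.subf_subset_of_mem h]
  box _ h := by grind [Formula.subf, Formula.mem_subf_self, Formula.subf_subset_of_mem h]

structure IsPrime (Φ Δ : Finset Formula) : Prop where
  subset : Δ ⊆ Φ
  closed : ∀ χ ∈ Φ, Deriv Δ χ → χ ∈ Δ
  bot_notMem : Formula.bot ∉ Δ
  prime : ∀ a b : Formula, a.or b ∈ Δ → a ∈ Δ ∨ b ∈ Δ

section Lindenbaum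

variable {Φ Γ : Finset Formula} {θ : Formula}

theorem exists_maximal_not_deriv (hΓ : Γ ⊆ Φ) (hθ : ¬ Deriv Γ θ) :
    ∃ Δ : Finset Formula, Γ ⊆ Δ ∧ Δ ⊆ Φ ∧ ¬ Deriv Δ θ ∧
      ∀ χ ∈ Φ, χ ∉ Δ → Deriv (insert χ (Δ : Set Formula)) θ := by
  classical
  obtain ⟨Δ, hΓΔ, hmax⟩ := (Φ.powerset.filter fun Δ => Γ ⊆ Δ ∧ ¬ Deriv Δ θ).exists_le_maximal
    (Finset.mem_filter.2 ⟨Finset.mem_powerset.2 hΓ, subset_rfl, hθ⟩)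
  obtain ⟨hΔΦ, -, hΔθ⟩ := by simpa using hmax.prop
  refine ⟨Δ, hΓΔ, hΔΦ, hΔθ, fun χ hχ hχΔ => by_contra fun hχθ => hχΔ ?_⟩
  refine hmax.2 (y := insert χ Δ) ?_ (Finset.subset_insert χ Δ) (Finset.mem_insert_self χ Δ)
  simp only [Finset.mem_filter, Finset.mem_powerset, Finset.insert_subset_iff, Finset.coe_insert]
  exact ⟨⟨hχ, hΔΦ⟩, hΓΔ.trans (Finset.subset_insert χ Δ), hχθ⟩

theorem exists_isPrime_of_not_deriv (hΦ : SubClosed Φ) (hΓ : Γ ⊆ Φ) (hθ : ¬ Deriv Γ θ) :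
    ∃ Δ : Finset Formula, Γ ⊆ Δ ∧ θ ∉ Δ ∧ IsPrime Φ Δ := by
  obtain ⟨Δ, hΓΔ, hΔΦ, hΔθ, hmax⟩ := exists_maximal_not_deriv hΓ hθ
  have closed : ∀ χ ∈ Φ, Deriv Δ χ → χ ∈ Δ := fun χ hχ hΔχ =>
    by_contra fun hχΔ => hΔθ ((hmax χ hχ hχΔ).imp_intro.mp hΔχ)
  refine ⟨Δ, hΓΔ, fun h => hΔθ (.ax h), hΔΦ, closed, fun h => hΔθ (.mp (.taut (.efq θ)) (.ax h)),
    fun a b hab => ?_⟩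
  obtain ⟨ha, hb⟩ := hΦ.or a b (hΔΦ hab)
  by_contra! ⟨haΔ, hbΔ⟩
  exact hΔθ (.mp (.mp (.mp (.taut (.orE a b θ)) (hmax a ha haΔ).imp_intro)
    (hmax b hb hbΔ).imp_intro) (.ax hab))

end Lindenbaum

def CanonicalRel (w v : Finset Formula) : Prop :=
  (∀ χ : Formula, χ.box ∈ w → χ ∈ v ∧ χ.box ∈ v) ∧ ∃ χ : Formula, χ.box ∈ v ∧ χ.box ∉ w

section Canonical

variable (Φ : Finset Formula) (hne : Nonempty {Δ // IsPrime Φ Δ})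

def canonicalFrame : IKFrame where
  W := {Δ // IsPrime Φ Δ}
  nonempty := hne
  le w v := w.1 ⊆ v.1
  R w v := CanonicalRel w.1 v.1
  po :=
    { refl := fun _ => subset_rfl
      trans := fun _ _ _ => subset_trans
      antisymm := fun _ _ h₁ h₂ => Subtype.ext (subset_antisymm h₁ h₂) }
  le_comp_R := fun hxy ⟨hbox, χ, hχy, hχx⟩ =>
    ⟨fun χ' hχ' => hbox χ' (hxy hχ'), χ, hχy, fun h => hχx (hxy h)⟩

def canonicalVal : ℕ → (canonicalFrame Φ hne).W → Prop := fun p w => Formula.var p ∈ w.1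

theorem monotoneVal_canonicalVal : MonotoneVal (canonicalFrame Φ hne) (canonicalVal Φ hne) :=
  fun _ _ _ hle h => hle h

theorem canonicalFrame_transitive : (canonicalFrame Φ hne).Transitive :=
  fun ⟨hxy, χ, hχy, hχx⟩ ⟨hyz, _⟩ =>
    ⟨fun χ' hχ' => hyz χ' (hxy χ' hχ').2, χ, (hyz χ hχy).2, hχx⟩

theorem canonicalFrame_brilliant : (canonicalFrame Φ hne).Brilliant :=
  fun ⟨hxy, χ, hχy, hχx⟩ hyz =>
    ⟨fun χ' hχ' => ⟨hyz (hxy χ' hχ').1, hyz (hxy χ' hχ').2⟩, χ, hyz hχy, hχx⟩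

theorem canonicalFrame_converseWellFounded : (canonicalFrame Φ hne).ConverseWellFounded := by
  have : Finite (canonicalFrame Φ hne).W :=
    Finite.of_injective (β := Φ.powerset) (fun w => ⟨w.1, Finset.mem_powerset.2 w.2.subset⟩)
      fun _ _ h => Subtype.ext (by simpa using h)
  have : IsTrans _ (flip (canonicalFrame Φ hne).R) :=
    ⟨fun _ _ _ hxy hyz => canonicalFrame_transitive Φ hne hyz hxy⟩
  have : Std.Irrefl (flip (canonicalFrame Φ hne).R) := ⟨fun _ ⟨_, _, hχ, hχ'⟩ => hχ' hχ⟩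
  exact (IKFrame.converseWellFounded_iff _).2 (Finite.wellFounded_of_trans_of_irrefl _)

end Canonical

section TruthLemma

variable {Φ w : Finset Formula} {a b : Formula}

theorem IsPrime.exists_of_imp_notMem (hΦ : SubClosed Φ) (hw : IsPrime Φ w) (hab : a.imp b ∈ Φ)
    (h : a.imp b ∉ w) : ∃ v, IsPrime Φ v ∧ w ⊆ v ∧ a ∈ v ∧ b ∉ v := by
  obtain ⟨ha, -⟩ := hΦ.imp a b hab
  have hnd : ¬ Deriv ↑(insert a w) b := fun d =>
    h (hw.closed _ hab (by rw [Finset.coe_insert] at d; exact d.imp_intro))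
  obtain ⟨v, hwv, hbv, hv⟩ :=
    exists_isPrime_of_not_deriv hΦ (Finset.insert_subset ha hw.subset) hnd
  exact ⟨v, hv, (Finset.subset_insert _ _).trans hwv, hwv (Finset.mem_insert_self _ _), hbv⟩

/-- The successor is built from `□a` together with `χ, □χ` for every `□χ ∈ w`; by the Löb rule
it cannot prove `a`. -/
theorem IsPrime.exists_canonicalRel_of_box_notMem (hΦ : SubClosed Φ) (hw : IsPrime Φ w)
    (ha : a.box ∈ Φ) (h : a.box ∉ w) : ∃ v, IsPrime Φ v ∧ CanonicalRel w v ∧ a ∉ v := by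
  classical
  set U := Φ.filter fun χ => χ.box ∈ w
  have hU : Formula.box '' ↑U ⊆ ↑w := by
    rintro _ ⟨χ, hχ, rfl⟩
    exact (Finset.mem_filter.1 hχ).2
  have hnd : ¬ Deriv ↑(insert a.box (U ∪ U.image Formula.box)) a := fun d =>
    h (hw.closed _ ha ((Deriv.box_of_lob (by simpa using d)).mono hU))
  have hsub : insert a.box (U ∪ U.image Formula.box) ⊆ Φ := by
    simp only [Finset.insert_subset_iff, Finset.union_subset_iff, Finset.image_subset_iff]
    exact ⟨ha, Finset.filter_subset _ _, fun χ hχ => hw.subset (Finset.mem_filter.1 hχ).2⟩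
  obtain ⟨v, hv_sup, hav, hv⟩ := exists_isPrime_of_not_deriv hΦ hsub hnd
  refine ⟨v, hv, ⟨fun χ hχ => ?_, a, hv_sup (Finset.mem_insert_self _ _), h⟩, hav⟩
  have hχU : χ ∈ U := Finset.mem_filter.2 ⟨hΦ.box χ (hw.subset hχ), hχ⟩
  exact ⟨hv_sup (by simp [hχU]), hv_sup (by simp [hχU])⟩

theorem sat_canonicalVal_iff (hΦ : SubClosed Φ) (hne : Nonempty {Δ // IsPrime Φ Δ})
    {ψ : Formula} (hψ : ψ ∈ Φ) (w : (canonicalFrame Φ hne).W) :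
    Sat (canonicalFrame Φ hne) (canonicalVal Φ hne) w ψ ↔ ψ ∈ w.1 := by
  induction ψ generalizing w with
  | var p => rfl
  | bot => exact ⟨False.elim, w.2.bot_notMem⟩
  | and a b iha ihb =>
    obtain ⟨ha, hb⟩ := hΦ.and a b hψ
    rw [Sat, iha ha, ihb hb]
    exact ⟨fun ⟨h₁, h₂⟩ => w.2.closed _ hψ (.mp (.mp (.taut (.andI a b)) (.ax h₁)) (.ax h₂)),
      fun h => ⟨w.2.closed _ ha (.mp (.taut (.andE1 a b)) (.ax h)),
        w.2.closed _ hb (.mp (.taut (.andE2 a b)) (.ax h))⟩⟩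
  | or a b iha ihb =>
    obtain ⟨ha, hb⟩ := hΦ.or a b hψ
    rw [Sat, iha ha, ihb hb]
    exact ⟨Or.rec (fun h => w.2.closed _ hψ (.mp (.taut (.orI1 a b)) (.ax h)))
      (fun h => w.2.closed _ hψ (.mp (.taut (.orI2 a b)) (.ax h))), w.2.prime a b⟩
  | imp a b iha ihb =>
    obtain ⟨ha, hb⟩ := hΦ.imp a b hψ
    refine ⟨fun hsat => by_contra fun hw => ?_, fun hw v hwv hav => ?_⟩
    · obtain ⟨v, hv, hwv, hav, hbv⟩ := w.2.exists_of_imp_notMem hΦ hψ hw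
      exact hbv ((ihb hb ⟨v, hv⟩).1 (hsat ⟨v, hv⟩ hwv ((iha ha ⟨v, hv⟩).2 hav)))
    · exact (ihb hb v).2 (v.2.closed _ hb (.mp (.ax (hwv hw)) (.ax ((iha ha v).1 hav))))
  | box a iha =>
    have ha := hΦ.box a hψ
    refine ⟨fun hsat => by_contra fun hw => ?_, fun hw v hwv => (iha ha v).2 (hwv.1 a hw).1⟩
    obtain ⟨v, hv, hwv, hav⟩ := w.2.exists_canonicalRel_of_box_notMem hΦ hψ hw
    exact hav ((iha ha ⟨v, hv⟩).1 (hsat ⟨v, hv⟩ hwv))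

end TruthLemma

theorem exists_countermodel {φ : Formula} (hφ : ¬ iGLH φ) :
    ∃ F : IKFrame, F.Transitive ∧ F.ConverseWellFounded ∧ F.Brilliant ∧ ¬ ValidOn F φ := by
  have hnd : ¬ Deriv ↑(∅ : Finset Formula) φ := fun d =>
    hφ (by rw [Finset.coe_empty] at d; exact d.iGLH_of_empty)
  obtain ⟨Δ, -, hφΔ, hΔ⟩ :=
    exists_isPrime_of_not_deriv φ.subClosed_subf (Finset.empty_subset _) hnd
  have hne : Nonempty {Δ // IsPrime φ.subf Δ} := ⟨⟨Δ, hΔ⟩⟩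
  refine ⟨canonicalFrame φ.subf hne, canonicalFrame_transitive _ _,
    canonicalFrame_converseWellFounded _ _, canonicalFrame_brilliant _ _, fun hvalid => hφΔ ?_⟩
  exact (sat_canonicalVal_iff φ.subClosed_subf hne φ.mem_subf_self ⟨Δ, hΔ⟩).1
    (hvalid _ (monotoneVal_canonicalVal _ _) _)

/-- Soundness and completeness of `iGL` with respect to transitive, converse well-founded,
brilliant intuitionistic Kripke frames. -/
theorem iGL_sound_complete (φ : Formula) :
    iGLH φ ↔ ∀ F : IKFrame, F.Transitive → F.ConverseWellFounded → F.Brilliant →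
      ValidOn F φ := by
  refine ⟨fun h F ht hc _ => h.sound ht hc, fun hvalid => by_contra fun hφ => ?_⟩
  obtain ⟨F, ht, hc, hb, hF⟩ := exists_countermodel hφ
  exact hF (hvalid F ht hc hb)
end

section
/- For all finite multisets Π, Γ of modal formulas and every modal formula φ, ⊢_iGL □((■Γ ⇒ φ)^#) → (Π, □Γ ⇒ □φ)^#, i.e. iGL proves that the box of the interpretation of the premise of the rule R_K4 implies the interpretation of its conclusion. -/
/-! Every member of `■Γ` is a boxed consequence of `□Γ`: `□ψ` of itself and `□□ψ` by the
axiom 4, which is derivable in `iGL` from Löb. Since `□` distributes over finite conjunctions,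
`Π, □Γ` proves `□⋀■Γ`, and the K axiom turns `□(⋀■Γ → φ)` into `□⋀■Γ → □φ`. -/

namespace iGLH

open Formula

theorem imp_self (φ : Formula) : iGLH (φ.imp φ) :=
  mp (mp (taut (IPC.a2 φ (φ.imp φ) φ)) (taut (IPC.a1 φ (φ.imp φ)))) (taut (IPC.a1 φ φ))

theorem imp_intro {φ : Formula} (ψ : Formula) (h : iGLH φ) : iGLH (ψ.imp φ) :=
  mp (taut (IPC.a1 φ ψ)) h

theorem mp_imp {χ φ ψ : Formula} (h₁ : iGLH (χ.imp (φ.imp ψ))) (h₂ : iGLH (χ.imp φ)) :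
    iGLH (χ.imp ψ) :=
  mp (mp (taut (IPC.a2 χ φ ψ)) h₁) h₂

theorem imp_trans_s14 {φ ψ χ : Formula} (h₁ : iGLH (φ.imp ψ)) (h₂ : iGLH (ψ.imp χ)) :
    iGLH (φ.imp χ) :=
  mp_imp (imp_intro φ h₂) h₁

theorem imp_comm {φ ψ χ : Formula} (h : iGLH (φ.imp (ψ.imp χ))) : iGLH (ψ.imp (φ.imp χ)) :=
  imp_trans_s14 (taut (IPC.a1 ψ φ)) (mp (taut (IPC.a2 φ ψ χ)) h)

theorem box_mono_s14 {φ ψ : Formula} (h : iGLH (φ.imp ψ)) : iGLH (φ.box.imp ψ.box) :=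
  mp (k φ ψ) (nec h)

theorem box_imp_box_imp_box_and (φ ψ : Formula) :
    iGLH (φ.box.imp (ψ.box.imp (φ.and ψ).box)) :=
  imp_trans_s14 (box_mono_s14 (taut (IPC.andI φ ψ))) (k ψ (φ.and ψ))

/-- Löb's axiom for `φ ∧ □φ`, whose premise `□(□(φ ∧ □φ) → φ ∧ □φ)` follows from `□φ`. -/
theorem box_imp_box_box (φ : Formula) : iGLH (φ.box.imp φ.box.box) := by
  set ψ := φ.and φ.box
  have hψφ : iGLH (ψ.box.imp φ.box) := box_mono_s14 (taut (IPC.andE1 φ φ.box))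
  have hstep : iGLH (φ.imp (ψ.box.imp ψ)) :=
    imp_comm (imp_trans_s14 hψφ (imp_comm (taut (IPC.andI φ φ.box))))
  have hψ : iGLH (φ.box.imp ψ.box) := imp_trans_s14 (box_mono_s14 hstep) (lob ψ)
  exact imp_trans_s14 hψ (box_mono_s14 (taut (IPC.andE2 φ φ.box)))

theorem conj_imp_of_mem {φ : Formula} : ∀ {l : List Formula}, φ ∈ l → iGLH ((conj l).imp φ)
  | ψ :: l, h => by
    rcases List.mem_cons.mp h with rfl | h
    · exact taut (IPC.andE1 φ (conj l))
    · exact imp_trans_s14 (taut (IPC.andE2 ψ (conj l))) (conj_imp_of_mem h)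

theorem imp_box_conj (χ : Formula) :
    ∀ l : List Formula, (∀ φ ∈ l, iGLH (χ.imp φ.box)) → iGLH (χ.imp (conj l).box)
  | [], _ => imp_intro χ (nec (imp_self bot))
  | φ :: l, h =>
    mp_imp (imp_trans_s14 (h φ List.mem_cons_self) (box_imp_box_imp_box_and φ (conj l)))
      (imp_box_conj χ l fun ψ hψ => h ψ (List.mem_cons_of_mem φ hψ))

theorem conj_append_map_box_imp_box_conj (Pi Γ : List Formula) :
    iGLH ((conj (Pi ++ Γ.map box)).imp (conj (Γ ++ Γ.map box)).box) := by
  have hmem {ψ : Formula} (hψ : ψ ∈ Γ) : iGLH ((conj (Pi ++ Γ.map box)).imp ψ.box) :=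
    conj_imp_of_mem (List.mem_append_right Pi (List.mem_map_of_mem hψ))
  refine imp_box_conj _ _ fun ψ hψ => ?_
  rcases List.mem_append.mp hψ with hψ | hψ
  · exact hmem hψ
  · obtain ⟨θ, hθ, rfl⟩ := List.mem_map.mp hψ
    exact imp_trans_s14 (hmem hθ) (box_imp_box_box θ)

end iGLH

/-- `iGL` proves that the box of the interpretation of the premise of `R_K4` implies the
interpretation of its conclusion: `⊢_iGL □((■Γ ⇒ φ)^#) → (Π, □Γ ⇒ □φ)^#`. -/
theorem box_rk4_interp (Pi Γ : List Formula) (φ : Formula) :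
    iGLH ((((conj (Γ ++ Γ.map Formula.box)).imp φ).box).imp
      ((conj (Pi ++ Γ.map Formula.box)).imp (φ.box))) :=
  iGLH.imp_comm <| iGLH.imp_trans_s14 (iGLH.conj_append_map_box_imp_box_conj Pi Γ)
    (iGLH.imp_comm (iGLH.k _ φ))
end

section
/- For every type A, the tree endofunctor T_A on the category of types, defined on objects by T_A(X) = A × List X and on morphisms by T_A(f) = id_A × List.map f, admits a terminal coalgebra. -/
open CategoryTheory Limits

/-- The tree endofunctor `T_A` on the category of types: `X ↦ A × List X`,
`f ↦ id_A × List.map f`. -/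
def treeFunctor (A : Type) : Type ⥤ Type where
  obj X := A × List X
  map f := TypeCat.ofHom (Prod.map id (List.map f))
  map_id := by
    intro X
    ext x : 3
    simp [Prod.map, CategoryTheory.types_id]
  map_comp := by
    intro X Y Z f g
    ext x : 3
    simp [Prod.map, CategoryTheory.types_comp]

/-- The polynomial functor whose M-type gives trees. -/
def treeP (A : Type) : PFunctor.{0} := ⟨A × ℕ, fun p => Fin p.2⟩

/-- Isomorphism `treeP A |>.obj X ≃ A × List X`. -/
def treeEquiv (A X : Type) : (treeP A).Obj X → A × List X :=
  fun p => (p.1.1, List.ofFn p.2)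

def treeEquivInv (A X : Type) : A × List X → (treeP A).Obj X :=
  fun p => ⟨(p.1, p.2.length), p.2.get⟩

lemma treeEquiv_leftInv (A X : Type) (p : A × List X) :
    treeEquiv A X (treeEquivInv A X p) = p := by
  simp [treeEquiv, treeEquivInv]

lemma treeEquiv_inj (A X : Type) {p q : (treeP A).Obj X}
    (h : treeEquiv A X p = treeEquiv A X q) : p = q := by
  obtain ⟨⟨a, n⟩, f⟩ := p
  obtain ⟨⟨b, m⟩, g⟩ := q
  simp only [treeEquiv, Prod.mk.injEq] at h
  obtain ⟨h1, h2⟩ := h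
  have hn : n = m := by
    have := congrArg List.length h2
    exact (List.length_ofFn (f := f)).symm.trans (this.trans List.length_ofFn)
  subst hn
  subst h1
  have hf : f = g := List.ofFn_injective h2
  subst hf
  rfl

lemma treeEquiv_natural (A X Y : Type) (f : X → Y) (p : (treeP A).Obj X) :
    treeEquiv A Y ((treeP A).map f p) = Prod.map id (List.map f) (treeEquiv A X p) := by
  obtain ⟨⟨a, n⟩, g⟩ := p
  simp [treeEquiv, treeP, PFunctor.map, Prod.map, List.map_ofFn, Function.comp]
  exact List.map_ofFn.symm

/-- The tree endofunctor `T_A` admits a terminal coalgebra. -/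
theorem treeFunctor_has_terminal_coalgebra (A : Type) :
    ∃ C : Endofunctor.Coalgebra (treeFunctor A), Nonempty (IsTerminal C) := by
  refine ⟨⟨PFunctor.M (treeP A), TypeCat.ofHom fun m => treeEquiv A _ (PFunctor.M.dest m)⟩, ⟨?_⟩⟩
  refine IsTerminal.ofUniqueHom
    (fun V => Endofunctor.Coalgebra.Hom.mk
      (TypeCat.ofHom (PFunctor.M.corec (fun x => treeEquivInv A V.V (V.str x)))) ?_) ?_
  · ext x
    show Prod.map id (List.map (PFunctor.M.corec _)) (V.str x) = treeEquiv A _ (PFunctor.M.dest (PFunctor.M.corec _ x))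
    rw [PFunctor.M.dest_corec, treeEquiv_natural]
    erw [treeEquiv_leftInv]
  · intro V m
    ext1
    rw [← TypeCat.ofHom_eq m.f]
    congr 1
    apply PFunctor.M.corec_unique
    intro x
    apply treeEquiv_inj
    rw [treeEquiv_natural]
    erw [treeEquiv_leftInv]
    exact (ConcreteCategory.congr_hom m.h x).symm
end

section
/- The standard trees form a terminal coalgebra of the tree endofunctor: let Tree(A) be the set of pairs (N, l) where N ⊆ ℕ* is a nonempty set of finite sequences of natural numbers closed under initial segments such that every s ∈ N has an arity n ∈ ℕ with s+:i ∈ N iff i < n, and l : N → A. Equip Tree(A) with ℓ(N, l) = l(nil) and suc(N, l) = [(N_i, l_i) : i < arity(nil)], where N_i = { s : i:+s ∈ N } and l_i(s) = l(i:+s). Then (Tree(A), ⟨ℓ, suc⟩) is a terminal coalgebra of the endofunctor T_A(X) = A × List X on the category of types. -/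
open CategoryTheory Limits

/-- A standard tree with labels in `A`: a nonempty set `N ⊆ ℕ*` of nodes, closed under
initial segments, where every node has an arity `n` (`s +: i ∈ N` iff `i < n`),
together with a labelling function `l : N → A`. -/
structure StdTree (A : Type) where
  N : Set (List ℕ)
  nonempty : N.Nonempty
  closed : ∀ ⦃s t : List ℕ⦄, s ∈ N → t <+: s → t ∈ N
  arity : ∀ s ∈ N, ∃ n : ℕ, ∀ i : ℕ, (s ++ [i]) ∈ N ↔ i < n
  lab : {s : List ℕ // s ∈ N} → A

theorem StdTree.nil_mem {A : Type} (t : StdTree A) : [] ∈ t.N := by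
  obtain ⟨s, hs⟩ := t.nonempty
  exact t.closed hs List.nil_prefix

/-- `ℓ(N, l) = l(nil)`: the label of the root. -/
def StdTree.root {A : Type} (t : StdTree A) : A := t.lab ⟨[], t.nil_mem⟩

/-- The `i`-th immediate subtree `(N_i, l_i)` of a standard tree,
where `N_i = { s | i :+ s ∈ N }` and `l_i(s) = l(i :+ s)`. -/
def StdTree.childTree {A : Type} (t : StdTree A) (i : ℕ) (hi : [i] ∈ t.N) : StdTree A where
  N := {s : List ℕ | i :: s ∈ t.N}
  nonempty := ⟨[], hi⟩
  closed := fun _ _ hs hu => t.closed hs (List.cons_prefix_cons.2 ⟨rfl, hu⟩)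
  arity := fun s hs => t.arity (i :: s) hs
  lab := fun s => t.lab ⟨i :: s.1, s.2⟩

/-- `suc(N, l) = [(N_i, l_i) : i < arity(nil)]`: the list of immediate subtrees. -/
noncomputable def StdTree.suc {A : Type} (t : StdTree A) : List (StdTree A) :=
  List.ofFn (n := (t.arity [] t.nil_mem).choose) fun i =>
    t.childTree i (((t.arity [] t.nil_mem).choose_spec i).2 i.isLt)

/-- The coalgebra structure map `⟨ℓ, suc⟩` on standard trees. -/
noncomputable def StdTree.dest {A : Type} (t : StdTree A) : A × List (StdTree A) :=
  (t.root, t.suc)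

namespace StdTreeProof

variable {A X : Type}

lemma isSome_getElem? {β : Type} (l : List β) (i : ℕ) : l[i]?.isSome ↔ i < l.length := by
  constructor
  · intro h
    obtain ⟨y, hy⟩ := Option.isSome_iff_exists.1 h
    exact (List.getElem?_eq_some_iff.1 hy).1
  · intro h
    rw [List.getElem?_eq_getElem h]; rfl

def walk (α : X → A × List X) : X → List ℕ → Option X
  | x, [] => some x
  | x, i :: s => (α x).2[i]?.bind fun y => walk α y s

lemma walk_append (α : X → A × List X) (x : X) (s t : List ℕ) :
    walk α x (s ++ t) = (walk α x s).bind fun y => walk α y t := by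
  induction s generalizing x with
  | nil => simp [walk]
  | cons i s ih => simp [walk, ih, Option.bind_assoc]

noncomputable def toTree (α : X → A × List X) (x : X) : StdTree A where
  N := {s | (walk α x s).isSome}
  nonempty := ⟨[], by simp [walk]⟩
  closed := by
    intro s t hs ht
    obtain ⟨r, rfl⟩ := ht
    rw [Set.mem_setOf_eq, walk_append] at hs
    rcases Option.isSome_iff_exists.1 hs with ⟨y, hy⟩
    rcases Option.bind_eq_some_iff.1 hy with ⟨z, hz, _⟩
    simp [Set.mem_setOf_eq, hz]
  arity := by
    intro s hs
    rw [Set.mem_setOf_eq] at hs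
    obtain ⟨y, hy⟩ := Option.isSome_iff_exists.1 hs
    refine ⟨(α y).2.length, fun i => ?_⟩
    simp [Set.mem_setOf_eq, walk_append, hy, walk, isSome_getElem?]
  lab := fun s => (α ((walk α x s.1).get s.2)).1

open Classical in
lemma suc_getElem? (t : StdTree A) (i : ℕ) :
    t.suc[i]? = if h : [i] ∈ t.N then some (t.childTree i h) else none := by
  unfold StdTree.suc
  have hspec : ∀ j : ℕ, [j] ∈ t.N ↔ j < (t.arity [] t.nil_mem).choose := by
    simpa using (t.arity [] t.nil_mem).choose_spec
  rw [List.getElem?_ofFn]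
  by_cases h : i < (t.arity [] t.nil_mem).choose
  · rw [dif_pos h, dif_pos ((hspec i).2 h)]
  · rw [dif_neg h, dif_neg (fun hm => h ((hspec i).1 hm))]

noncomputable def tWalk : StdTree A → List ℕ → Option (StdTree A)
  | t, [] => some t
  | t, i :: s => t.suc[i]?.bind fun u => tWalk u s

lemma mem_iff_tWalk (s : List ℕ) : ∀ t : StdTree A, s ∈ t.N ↔ (tWalk t s).isSome := by
  induction s with
  | nil => intro t; simp [tWalk, t.nil_mem]
  | cons i s ih =>
    intro t
    rw [tWalk, suc_getElem?]
    by_cases h : [i] ∈ t.N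
    · rw [dif_pos h]
      simp only [Option.bind_some]
      rw [← ih]
      exact Iff.rfl
    · rw [dif_neg h]
      simp only [Option.bind_none, Option.isSome_none]
      constructor
      · intro hm; exact absurd (t.closed hm ⟨s, rfl⟩) h
      · intro hf; simp at hf

lemma lab_tWalk (s : List ℕ) : ∀ (t u : StdTree A), tWalk t s = some u →
    ∀ h : s ∈ t.N, t.lab ⟨s, h⟩ = u.root := by
  induction s with
  | nil => intro t u hu h; cases hu; rfl
  | cons i s ih =>
    intro t u hu h
    rw [tWalk, suc_getElem?] at hu
    by_cases h' : [i] ∈ t.N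
    · rw [dif_pos h'] at hu
      simp only [Option.bind_some] at hu
      exact ih (t.childTree i h') u hu h
    · rw [dif_neg h'] at hu; simp at hu

lemma ext' {t u : StdTree A} (hN : t.N = u.N)
    (hlab : ∀ s hs hs', t.lab ⟨s, hs⟩ = u.lab ⟨s, hs'⟩) : t = u := by
  cases t; cases u
  simp only at hN
  subst hN
  congr 1
  funext ⟨s, hs⟩
  exact hlab s hs hs

lemma ext_of_root_tWalk {t u : StdTree A}
    (H : ∀ s, (tWalk t s).map StdTree.root = (tWalk u s).map StdTree.root) : t = u := by
  have hN : t.N = u.N := by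
    ext s
    rw [mem_iff_tWalk, mem_iff_tWalk]
    have := congrArg Option.isSome (H s)
    simpa using this
  refine ext' hN ?_
  intro s hs hs'
  obtain ⟨v, hv⟩ := Option.isSome_iff_exists.1 ((mem_iff_tWalk s t).1 hs)
  obtain ⟨w, hw⟩ := Option.isSome_iff_exists.1 ((mem_iff_tWalk s u).1 hs')
  have hr : v.root = w.root := by
    have := H s; rw [hv, hw] at this; simpa using this
  rw [lab_tWalk s t v hv hs, lab_tWalk s u w hw hs', hr]

lemma root_toTree (α : X → A × List X) (x : X) : (toTree α x).root = (α x).1 := rfl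

lemma childTree_toTree (α : X → A × List X) (x : X) (i : ℕ) (y : X)
    (hy : (α x).2[i]? = some y) (hi : [i] ∈ (toTree α x).N) :
    (toTree α x).childTree i hi = toTree α y := by
  have hwe : ∀ s, walk α x (i :: s) = walk α y s := by
    intro s; rw [walk, hy]; rfl
  refine ext' ?_ ?_
  · ext s
    show (walk α x (i :: s)).isSome ↔ (walk α y s).isSome
    rw [hwe]
  · intro s hs hs'
    obtain ⟨z, hz⟩ := Option.isSome_iff_exists.1 hs'
    have hz' : walk α x (i :: s) = some z := (hwe s).trans hz
    show (α ((walk α x (i :: s)).get _)).1 = (α ((walk α y s).get _)).1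
    simp only [hz, hz', Option.get_some]

lemma suc_toTree (α : X → A × List X) (x : X) :
    (toTree α x).suc = List.map (toTree α) (α x).2 := by
  apply List.ext_getElem?
  intro i
  rw [suc_getElem?, List.getElem?_map]
  by_cases h : i < (α x).2.length
  · have hy : (α x).2[i]? = some ((α x).2[i]) := List.getElem?_eq_getElem h
    have hi : [i] ∈ (toTree α x).N := by
      show (walk α x [i]).isSome
      simp [walk, hy]
    rw [dif_pos hi, hy, Option.map_some, childTree_toTree α x i _ hy hi]
  · have hy : (α x).2[i]? = none := List.getElem?_eq_none (le_of_not_gt h)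
    rw [hy, Option.map_none, dif_neg]
    intro hi
    have : (walk α x [i]).isSome := hi
    simp [walk, hy] at this

lemma tWalk_hom (α : X → A × List X) (g : X → StdTree A)
    (hg : ∀ x, (g x).root = (α x).1 ∧ (g x).suc = List.map g (α x).2) :
    ∀ (s : List ℕ) (x : X), tWalk (g x) s = (walk α x s).map g := by
  intro s
  induction s with
  | nil => intro x; simp [tWalk, walk]
  | cons i s ih =>
    intro x
    rw [tWalk, walk, (hg x).2]
    cases hz : (α x).2[i]? with
    | none => simp [hz]
    | some y => simp [hz, ih y]


lemma unique_hom (α : X → A × List X) (g : X → StdTree A)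
    (hg : ∀ x, (g x).root = (α x).1 ∧ (g x).suc = List.map g (α x).2) (x : X) :
    g x = toTree α x := by
  have hT : ∀ y, (toTree α y).root = (α y).1 ∧ (toTree α y).suc = List.map (toTree α) (α y).2 :=
    fun y => ⟨rfl, suc_toTree α y⟩
  apply ext_of_root_tWalk
  intro s
  rw [tWalk_hom α g hg, tWalk_hom α (toTree α) hT]
  simp only [Option.map_map]
  cases hw : walk α x s with
  | none => rfl
  | some y => simp [Function.comp, (hg y).1, root_toTree]

end StdTreeProof

/-- The standard trees, equipped with `⟨ℓ, suc⟩`, form a terminal coalgebra of the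
tree endofunctor `T_A`. -/
theorem stdTree_isTerminal_coalgebra (A : Type) :
    Nonempty (IsTerminal
      ({ V := StdTree A, str := TypeCat.ofHom StdTree.dest } : Endofunctor.Coalgebra (treeFunctor A))) := by
  constructor
  refine IsTerminal.ofUniqueHom
    (fun Y => { f := TypeCat.ofHom (StdTreeProof.toTree Y.str), h := ?_ }) ?_
  · ext x : 3
    show Prod.map id (List.map (StdTreeProof.toTree Y.str)) (Y.str x)
      = StdTree.dest (StdTreeProof.toTree Y.str x)
    refine Prod.ext ?_ ?_
    · rfl
    · exact (StdTreeProof.suc_toTree Y.str x).symm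
  · intro Y m
    apply CategoryTheory.Endofunctor.Coalgebra.ext
    ext x : 3
    have hm : ∀ y, StdTree.dest (m.f y) = ((Y.str y).1, List.map m.f (Y.str y).2) := by
      intro y
      have h := types_congr_hom m.h y
      exact h.symm
    exact StdTreeProof.unique_hom Y.str m.f
      (fun y => ⟨congrArg Prod.fst (hm y), congrArg Prod.snd (hm y)⟩) x
end
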